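/- For every ε > 0 there exists a constant C > 0 such that for every prime p and all integers M, N with 1 ≤ M, N < p, one has ∑ 1/(‖x‖_p · ‖x̄‖_p) ≤ C (1/p + MN/p²) p^ε, where the sum is over all integers x with 1 ≤ x ≤ p-1, ‖x‖_p > p/M and ‖x̄‖_p > p/N. -/

import Mathlib

/-- the multiplicative inverse of `x` modulo `p`, as a natural number -/
def pinv (p x : ℕ) : ℕ := ((x : ZMod p)⁻¹).val

/-- `‖u‖_p`: the distance from `u` to the nearest multiple of `p` -/
def dp (p : ℕ) (u : ℤ) : ℕ := min (u % p).toNat (p - (u % p).toNat)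

/-!
Write `a = ‖x‖_p` and `b = ‖x̄‖_p`. Then `ab ≡ ±1 (mod p)`, the size conditions force
`a, b ≥ 2`, and `a, b ≤ p / 2`, so `ab = kp ± 1` with `1 ≤ k ≤ p`. Since `x` is determined up to
sign by the divisor `a` of `ab`, each value `y = ab` comes from at most `2 d(y) ≪ p^(ε/2)`
values of `x`. Summing `1 / y` over `y = kp ± 1` gives `≪ log p / p`, so the whole sum is
`≪ p^(ε - 1)`.
-/

open Finset Real

lemma natCast_add_one_le_mul_rpow {ε q : ℝ} (hε : 0 < ε) (hq : 2 ≤ q) (a : ℕ) :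
    (a + 1 : ℝ) ≤ (1 + (ε * log 2)⁻¹) * q ^ (a * ε) := by
  set t := ε * log 2
  have ht : 0 < t := mul_pos hε (log_pos one_lt_two)
  have hexp : 1 + a * t ≤ q ^ (a * ε) := calc
    1 + a * t ≤ exp (a * t) := by linarith [add_one_le_exp (a * t)]
    _ = 2 ^ (a * ε) := by rw [rpow_def_of_pos two_pos, mul_comm (log 2), mul_assoc]
    _ ≤ q ^ (a * ε) := rpow_le_rpow zero_le_two hq (by positivity)
  calc (a + 1 : ℝ) ≤ 1 + a * t + t⁻¹ + a := by
        linarith [inv_pos.2 ht, mul_nonneg a.cast_nonneg ht.le]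
    _ = (1 + t⁻¹) * (1 + a * t) := by field_simp; ring
    _ ≤ (1 + t⁻¹) * q ^ (a * ε) := by gcongr

lemma natCast_add_one_le_rpow_of_two_le {ε q : ℝ} (hq : 0 ≤ q) (h : 2 ≤ q ^ ε) (a : ℕ) :
    (a + 1 : ℝ) ≤ q ^ (a * ε) := calc
  (a + 1 : ℝ) ≤ 2 ^ a := by exact_mod_cast Nat.lt_two_pow_self
  _ ≤ (q ^ ε) ^ a := pow_le_pow_left₀ zero_le_two h a
  _ = q ^ (a * ε) := by rw [← rpow_natCast, ← rpow_mul hq, mul_comm]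

lemma Nat.cast_rpow_eq_prod_primeFactors {n : ℕ} (hn : n ≠ 0) (ε : ℝ) :
    (n : ℝ) ^ ε = ∏ q ∈ n.primeFactors, (q : ℝ) ^ (n.factorization q * ε) := by
  conv_lhs => rw [Nat.prod_primeFactors_pow_factorization hn]
  push_cast
  rw [← finsetProd_rpow _ _ fun _ _ => by positivity]
  refine prod_congr rfl fun q _ => ?_
  rw [← rpow_natCast, ← rpow_mul q.cast_nonneg]

theorem exists_card_divisors_le_mul_rpow {ε : ℝ} (hε : 0 < ε) :
    ∃ C : ℝ, 0 < C ∧ ∀ n : ℕ, (#n.divisors : ℝ) ≤ C * n ^ ε := by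
  set K := 1 + (ε * log 2)⁻¹
  have hK : 1 ≤ K := le_add_of_nonneg_right (inv_nonneg.2 (mul_pos hε (log_pos one_lt_two)).le)
  set T := ⌈(2 : ℝ) ^ ε⁻¹⌉₊
  refine ⟨K ^ T, by positivity, fun n => ?_⟩
  rcases eq_or_ne n 0 with rfl | hn
  · simp [zero_rpow hε.ne']
  -- a prime `q ≥ T` has `q ^ ε ≥ 2`, so only the primes below `T` cost a factor `K`
  have hfactor : ∀ q ∈ n.primeFactors, (n.factorization q + 1 : ℝ) ≤
      (if q < T then K else 1) * q ^ (n.factorization q * ε) := by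
    intro q hq
    split_ifs with hqT
    · exact natCast_add_one_le_mul_rpow hε
        (by exact_mod_cast (Nat.prime_of_mem_primeFactors hq).two_le) _
    · rw [one_mul]
      refine natCast_add_one_le_rpow_of_two_le q.cast_nonneg ?_ _
      calc (2 : ℝ) = ((2 : ℝ) ^ ε⁻¹) ^ ε := by
            rw [← rpow_mul zero_le_two, inv_mul_cancel₀ hε.ne', rpow_one]
        _ ≤ (q : ℝ) ^ ε := by
          gcongr
          exact (Nat.le_ceil _).trans (by exact_mod_cast not_lt.1 hqT)
  have hsmall : ∏ q ∈ n.primeFactors, (if q < T then K else 1) ≤ K ^ T := by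
    rw [prod_ite, prod_const, prod_const_one, mul_one]
    refine pow_le_pow_right₀ hK ((card_le_card fun q hq => ?_).trans (card_range T).le)
    exact mem_range.2 (mem_filter.1 hq).2
  rw [Nat.card_divisors hn, Nat.cast_rpow_eq_prod_primeFactors hn]
  push_cast
  calc _ ≤ ∏ q ∈ n.primeFactors, (if q < T then K else 1) * (q : ℝ) ^ (n.factorization q * ε) :=
        prod_le_prod (fun _ _ => by positivity) hfactor
    _ = _ := prod_mul_distrib
    _ ≤ _ := by gcongr

lemma dp_natCast_of_lt {p x : ℕ} (hx : x < p) : dp p x = min x (p - x) := by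
  have : (x : ℤ) % p = x := Int.emod_eq_of_lt (by positivity) (by exact_mod_cast hx)
  simp [dp, this]

lemma two_mul_dp_le (p : ℕ) (u : ℤ) : 2 * dp p u ≤ p := by
  unfold dp; omega

lemma natCast_dp_eq_or_eq_neg {p x : ℕ} (hx : x < p) :
    ((dp p x : ℕ) : ZMod p) = x ∨ ((dp p x : ℕ) : ZMod p) = -x := by
  rw [dp_natCast_of_lt hx]
  rcases min_choice x (p - x) with h | h <;> rw [h]
  · exact Or.inl rfl
  · right; rw [Nat.cast_sub hx.le, ZMod.natCast_self, zero_sub]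

lemma natCast_mul_pinv {p x : ℕ} [NeZero p] (hx : IsUnit (x : ZMod p)) :
    (x : ZMod p) * pinv p x = 1 := by
  rw [pinv, ZMod.natCast_zmod_val, ZMod.mul_inv_of_unit _ hx]

lemma natCast_dp_mul_dp_pinv {p x : ℕ} [Fact p.Prime] (hx0 : 0 < x) (hxp : x < p) :
    ((dp p x * dp p (pinv p x) : ℕ) : ZMod p) = 1 ∨
      ((dp p x * dp p (pinv p x) : ℕ) : ZMod p) = -1 := by
  have hinv := natCast_mul_pinv (p := p) (x := x) <| isUnit_iff_ne_zero.2 <| by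
    rw [Ne, ZMod.natCast_eq_zero_iff]; exact Nat.not_dvd_of_pos_of_lt hx0 hxp
  rw [Nat.cast_mul]
  rcases natCast_dp_eq_or_eq_neg hxp with h1 | h1 <;>
    rcases natCast_dp_eq_or_eq_neg (show pinv p x < p from ZMod.val_lt _) with h2 | h2 <;>
    simp [h1, h2, hinv]

lemma card_filter_dp_eq_le_two {p : ℕ} (s : Finset ℕ) (hs : ∀ x ∈ s, x < p) (d : ℕ) :
    #{x ∈ s | dp p ((x : ℕ) : ℤ) = d} ≤ 2 := by
  refine (card_le_card fun x hx => ?_).trans (card_le_two (a := d) (b := p - d))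
  obtain ⟨hxs, hxd⟩ := mem_filter.1 hx
  have hxp := hs x hxs
  rw [dp_natCast_of_lt hxp] at hxd
  simp only [mem_insert, mem_singleton]
  omega

lemma card_filter_dp_mul_eq_le {p y : ℕ} (hy : y ≠ 0) (s : Finset ℕ) (hs : ∀ x ∈ s, x < p)
    (f : ℕ → ℕ) : #{x ∈ s | dp p ((x : ℕ) : ℤ) * f x = y} ≤ 2 * #y.divisors := by
  refine card_le_mul_card_image_of_maps_to (f := fun x : ℕ => dp p x) (fun x hx => ?_) 2
    fun d _ => card_filter_dp_eq_le_two _ (fun x hx => hs x (mem_filter.1 hx).1) d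
  obtain ⟨-, hxy⟩ := mem_filter.1 hx
  exact Nat.mem_divisors.2 ⟨hxy ▸ dvd_mul_right _ _, hy⟩

lemma exists_mem_Icc_eq_mul_add_one_or_mul_sub_one {p y : ℕ} (hp : 2 ≤ p) (hy : 2 ≤ y)
    (hyp : y ≤ p ^ 2) (h : (y : ZMod p) = 1 ∨ (y : ZMod p) = -1) :
    ∃ k ∈ Icc 1 p, y = k * p + 1 ∨ y = k * p - 1 := by
  have hsq : p ^ 2 = p * p := sq p
  rcases h with h | h
  · obtain ⟨k, hk⟩ : p ∣ y - 1 := by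
      rw [← ZMod.natCast_eq_zero_iff, Nat.cast_sub (by omega), h, Nat.cast_one, sub_self]
    have hkp : p * k < p * p := by omega
    have hk0 : k ≠ 0 := by rintro rfl; omega
    exact ⟨k, mem_Icc.2 ⟨by omega, (Nat.lt_of_mul_lt_mul_left hkp).le⟩,
      Or.inl (by rw [mul_comm]; omega)⟩
  · obtain ⟨k, hk⟩ : p ∣ y + 1 := by
      rw [← ZMod.natCast_eq_zero_iff, Nat.cast_add, h, Nat.cast_one, neg_add_cancel]
    have hkp : p * k < p * (p + 1) := by rw [mul_add, mul_one]; omega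
    have hk0 : k ≠ 0 := by rintro rfl; omega
    exact ⟨k, mem_Icc.2 ⟨by omega, Nat.lt_succ_iff.1 (Nat.lt_of_mul_lt_mul_left hkp)⟩,
      Or.inr (by rw [mul_comm]; omega)⟩

lemma inv_add_inv_le_three_div {n : ℕ} (hn : 2 ≤ n) :
    ((n + 1 : ℕ) : ℝ)⁻¹ + ((n - 1 : ℕ) : ℝ)⁻¹ ≤ 3 / n := by
  have hn' : (2 : ℝ) ≤ n := by exact_mod_cast hn
  rw [Nat.cast_sub (by omega), Nat.cast_add, Nat.cast_one]
  have h₁ : ((n : ℝ) + 1)⁻¹ ≤ (n : ℝ)⁻¹ := inv_anti₀ (by positivity) (by linarith)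
  have h₂ : ((n : ℝ) - 1)⁻¹ ≤ 2 / n := by
    rw [inv_eq_one_div, div_le_div_iff₀ (by linarith) (by linarith)]; linarith
  linarith [show (3 : ℝ) / n = (n : ℝ)⁻¹ + 2 / n by ring]

theorem sum_inv_le_of_natCast_eq_one_or_neg_one {p : ℕ} (hp : 2 ≤ p) (S : Finset ℕ)
    (hS : ∀ y ∈ S, 2 ≤ y ∧ y ≤ p ^ 2 ∧ ((y : ZMod p) = 1 ∨ (y : ZMod p) = -1)) :
    ∑ y ∈ S, (y : ℝ)⁻¹ ≤ 3 / p * (1 + log p) := by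
  set A := (Icc 1 p).image (· * p + 1)
  set B := (Icc 1 p).image (· * p - 1)
  have hsub : S ⊆ A ∪ B := fun y hy => by
    obtain ⟨hy2, hyp, hmod⟩ := hS y hy
    obtain ⟨k, hk, rfl | rfl⟩ := exists_mem_Icc_eq_mul_add_one_or_mul_sub_one hp hy2 hyp hmod
    · exact mem_union_left _ (mem_image_of_mem _ hk)
    · exact mem_union_right _ (mem_image_of_mem _ hk)
  have hnonneg : ∀ y : ℕ, 0 ≤ (y : ℝ)⁻¹ := fun y => by positivity
  calc ∑ y ∈ S, (y : ℝ)⁻¹ ≤ ∑ y ∈ A ∪ B, (y : ℝ)⁻¹ :=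
        sum_le_sum_of_subset_of_nonneg hsub fun y _ _ => hnonneg y
    _ ≤ ∑ y ∈ A, (y : ℝ)⁻¹ + ∑ y ∈ B, (y : ℝ)⁻¹ := by
        rw [← sum_union_inter]; exact le_add_of_nonneg_right (sum_nonneg fun y _ => hnonneg y)
    _ ≤ ∑ k ∈ Icc 1 p, (((k * p + 1 : ℕ) : ℝ)⁻¹ + ((k * p - 1 : ℕ) : ℝ)⁻¹) := by
        rw [sum_add_distrib]
        exact add_le_add (sum_image_le_of_nonneg fun y _ => hnonneg y)
          (sum_image_le_of_nonneg fun y _ => hnonneg y)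
    _ ≤ ∑ k ∈ Icc 1 p, 3 / ((k * p : ℕ) : ℝ) := sum_le_sum fun k hk =>
        inv_add_inv_le_three_div (by nlinarith [(mem_Icc.1 hk).1])
    _ = 3 / p * harmonic p := by
        rw [harmonic_eq_sum_Icc]; push_cast; rw [mul_sum]
        exact sum_congr rfl fun k _ => by field_simp
    _ ≤ 3 / p * (1 + log p) := by gcongr; exact harmonic_le_one_add_log p

theorem sum_inv_dp_mul_dp_pinv_le {p : ℕ} [Fact p.Prime] {D : ℝ}
    (hD : ∀ y ≤ p ^ 2, (#y.divisors : ℝ) ≤ D) (s : Finset ℕ)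
    (hs : s ⊆ Icc 1 (p - 1)) (h2 : ∀ x ∈ s, 2 ≤ dp p x * dp p (pinv p x)) :
    ∑ x ∈ s, 1 / ((dp p x : ℝ) * dp p (pinv p x)) ≤ 2 * D * (3 / p * (1 + log p)) := by
  have hp := (Fact.out : p.Prime).two_le
  set g : ℕ → ℕ := fun x => dp p x * dp p (pinv p x)
  have hlt : ∀ x ∈ s, x < p := fun x hx => by have := mem_Icc.1 (hs hx); omega
  have hg : ∀ x ∈ s, 2 ≤ g x ∧ g x ≤ p ^ 2 ∧ ((g x : ZMod p) = 1 ∨ (g x : ZMod p) = -1) := by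
    intro x hx
    refine ⟨h2 x hx, ?_, natCast_dp_mul_dp_pinv (mem_Icc.1 (hs hx)).1 (hlt x hx)⟩
    have := Nat.mul_le_mul (two_mul_dp_le p x) (two_mul_dp_le p (pinv p x))
    simp only [g, sq]
    nlinarith
  have hfiber : ∀ y ∈ s.image g, (#{x ∈ s | g x = y} : ℝ) ≤ 2 * D := by
    intro y hy
    obtain ⟨x, hx, rfl⟩ := mem_image.1 hy
    calc (#{x' ∈ s | g x' = g x} : ℝ) ≤ 2 * #(g x).divisors := by
          exact_mod_cast card_filter_dp_mul_eq_le (by have := (hg x hx).1; omega) s hlt _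
      _ ≤ 2 * D := by gcongr; exact hD _ (hg x hx).2.1
  have hD0 : 0 ≤ D := by simpa using hD 0 (Nat.zero_le _)
  calc ∑ x ∈ s, 1 / ((dp p x : ℝ) * dp p (pinv p x)) = ∑ x ∈ s, ((g x : ℕ) : ℝ)⁻¹ := by
        simp [g]
    _ = ∑ y ∈ s.image g, #{x ∈ s | g x = y} • (y : ℝ)⁻¹ := sum_comp (fun y : ℕ => (y : ℝ)⁻¹) g
    _ ≤ ∑ y ∈ s.image g, 2 * D * (y : ℝ)⁻¹ := sum_le_sum fun y hy => by
        rw [nsmul_eq_mul]; gcongr; exact hfiber y hy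
    _ = 2 * D * ∑ y ∈ s.image g, (y : ℝ)⁻¹ := (mul_sum ..).symm
    _ ≤ 2 * D * (3 / p * (1 + log p)) := by
        gcongr
        exact sum_inv_le_of_natCast_eq_one_or_neg_one hp _ fun y hy => by
          obtain ⟨x, hx, rfl⟩ := mem_image.1 hy; exact hg x hx

lemma two_le_of_lt_mul {p M d : ℕ} (hM : M < p) (h : (p : ℝ) < M * d) : 2 ≤ d := by
  have h' : p < M * d := by exact_mod_cast h
  by_contra! hd
  interval_cases d <;> omega

theorem sum_inverse_dist_bound_S4 :
    ∀ ε : ℝ, 0 < ε → ∃ C : ℝ, 0 < C ∧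
      ∀ p M N : ℕ, p.Prime → 1 ≤ M → M < p → 1 ≤ N → N < p →
        ∑ x ∈ (Finset.Icc 1 (p - 1)).filter
            (fun x : ℕ => (p : ℝ) < M * dp p x ∧ (p : ℝ) < N * dp p (pinv p x)),
            (1 : ℝ) / ((dp p x : ℝ) * (dp p (pinv p x) : ℝ)) ≤
          C * (1 / (p : ℝ) + (M : ℝ) * N / (p : ℝ) ^ 2) * (p : ℝ) ^ ε := by
  intro ε hε
  obtain ⟨C, hC, hdiv⟩ := exists_card_divisors_le_mul_rpow (by positivity : 0 < ε / 4)
  refine ⟨6 * C * (1 + 2 / ε), by positivity, fun p M N hp _ hMp _ hNp => ?_⟩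
  have := Fact.mk hp
  have hp0 : (0 : ℝ) < p := by exact_mod_cast hp.pos
  have hD : ∀ y ≤ p ^ 2, (#y.divisors : ℝ) ≤ C * p ^ (ε / 2) := fun y hy => calc
    (#y.divisors : ℝ) ≤ C * y ^ (ε / 4) := hdiv y
    _ ≤ C * ((p : ℝ) ^ 2) ^ (ε / 4) := by gcongr; exact_mod_cast hy
    _ = C * p ^ (ε / 2) := by rw [← rpow_natCast, ← rpow_mul hp0.le]; ring_nf
  have hlog : 1 + log p ≤ (1 + 2 / ε) * p ^ (ε / 2) := by
    have h₁ : 1 ≤ (p : ℝ) ^ (ε / 2) := one_le_rpow (by exact_mod_cast hp.one_le) (by positivity)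
    have h₂ : log p ≤ 2 / ε * p ^ (ε / 2) :=
      (log_le_rpow_div hp0.le (half_pos hε)).trans_eq (by ring)
    linarith
  refine (sum_inv_dp_mul_dp_pinv_le hD _ (filter_subset _ _) fun x hx => ?_).trans ?_
  · obtain ⟨-, hxM, hxN⟩ := mem_filter.1 hx
    exact le_trans (by norm_num)
      (Nat.mul_le_mul (two_le_of_lt_mul hMp hxM) (two_le_of_lt_mul hNp hxN))
  calc 2 * (C * (p : ℝ) ^ (ε / 2)) * (3 / p * (1 + log p))
      ≤ 2 * (C * (p : ℝ) ^ (ε / 2)) * (3 / p * ((1 + 2 / ε) * (p : ℝ) ^ (ε / 2))) := by gcongr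
    _ = 6 * C * (1 + 2 / ε) * (1 / p) * (p : ℝ) ^ ε := by
        rw [← add_halves ε, rpow_add hp0, add_halves]; ring
    _ ≤ _ := by gcongr; exact le_add_of_nonneg_right (by positivity)
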